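/- arXiv:2311.08561 — 5 statements merged into one kernel-verified Lean document; each statement's English description precedes it below -/
import Mathlib

section
/- Proposition 1 (the split maximizing the chi score occurs at the coordinate of a point within a bin; interval form): suppose the fixed observed counts satisfy (o_+, o_−) ≠ (0, 0). Then for all real numbers a, b, c with l_s < a < c < b < u_s, the chi-score change satisfies δ_chi(c) < max(δ_chi(a), δ_chi(b)). Consequently, on any closed subinterval of (l_s, u_s) between consecutive observation coordinates (where o_+ and o_− are constant), the maximum of δ_chi is attained at an endpoint of the subinterval, so the split maximizing the chi score must occur at the coordinate of a point within the bin. -/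
/-- The chi score of a bin with observed count `o` and expected count `e`. -/
noncomputable def chiScore (o e : ℝ) : ℝ := (o - e) ^ 2 / e

/-- The change in total chi score due to a vertical split of the bin
`(ls, us] × (lt, ut]` at coordinate `c`, with fixed observed counts `op`
above and `om` below the split, and total sample size `n`. -/
noncomputable def deltaChi (ls us lt ut n op om : ℝ) (c : ℝ) : ℝ :=
  chiScore op ((us - c) * (ut - lt) / n) +
  chiScore om ((c - ls) * (ut - lt) / n) -
  chiScore (op + om) ((us - ls) * (ut - lt) / n)

private lemma smul_strictConvexOn {s : Set ℝ} {f : ℝ → ℝ} {A : ℝ} (hA : 0 < A)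
    (hf : StrictConvexOn ℝ s f) : StrictConvexOn ℝ s (fun x => A * f x) := by
  refine ⟨hf.1, fun x hx y hy hxy a b ha hb hab => ?_⟩
  have h := hf.2 hx hy hxy ha hb hab
  simp only [smul_eq_mul] at h ⊢
  nlinarith [h]

private lemma sc_upper (ls us : ℝ) : StrictConvexOn ℝ (Set.Ioo ls us)
    (fun x => (us - x)⁻¹) := by
  refine ⟨convex_Ioo _ _, fun x hx y hy hxy a b ha hb hab => ?_⟩
  have h := (strictConvexOn_zpow (m := -1) (by norm_num) (by norm_num)).2
    (show us - x ∈ Set.Ioi (0:ℝ) from sub_pos.2 hx.2)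
    (show us - y ∈ Set.Ioi (0:ℝ) from sub_pos.2 hy.2)
    (fun h => hxy (by linarith)) ha hb hab
  simp only [smul_eq_mul, zpow_neg, zpow_one] at h ⊢
  have key : us - (a * x + b * y) = a * (us - x) + b * (us - y) := by
    linear_combination (-us) * hab
  rw [key]; exact h

private lemma sc_lower (ls us : ℝ) : StrictConvexOn ℝ (Set.Ioo ls us)
    (fun x => (x - ls)⁻¹) := by
  refine ⟨convex_Ioo _ _, fun x hx y hy hxy a b ha hb hab => ?_⟩
  have h := (strictConvexOn_zpow (m := -1) (by norm_num) (by norm_num)).2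
    (show x - ls ∈ Set.Ioi (0:ℝ) from sub_pos.2 hx.1)
    (show y - ls ∈ Set.Ioi (0:ℝ) from sub_pos.2 hy.1)
    (fun h => hxy (by linarith)) ha hb hab
  simp only [smul_eq_mul, zpow_neg, zpow_one] at h ⊢
  have key : (a * x + b * y) - ls = a * (x - ls) + b * (y - ls) := by
    linear_combination ls * hab
  rw [key]; exact h

private lemma cv_smul {s : Set ℝ} {f : ℝ → ℝ} {A : ℝ} (hA : 0 ≤ A)
    (hf : ConvexOn ℝ s f) : ConvexOn ℝ s (fun x => A * f x) := by
  simpa [smul_eq_mul] using hf.smul hA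

/-- Proposition 1 (interval form): if `(op, om) ≠ (0, 0)`, then for any
`ls < a < c < b < us` the chi-score change at `c` is strictly less than the
maximum of the changes at `a` and `b`; hence on any closed subinterval between
consecutive observation coordinates the maximum is attained at an endpoint. -/
theorem chi_split_max_at_point (ls us lt ut n op om : ℝ)
    (hlu : ls < us) (hlt : lt < ut) (hn : 0 < n)
    (hop : 0 ≤ op) (hom : 0 ≤ om) (hne : ¬(op = 0 ∧ om = 0)) :
    ∀ a b c : ℝ, ls < a → a < c → c < b → b < us →
      deltaChi ls us lt ut n op om c <
        max (deltaChi ls us lt ut n op om a) (deltaChi ls us lt ut n op om b) := by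
  intro a b c h1 h2 h3 h4
  set A : ℝ := op ^ 2 * n / (ut - lt) with hA
  set B : ℝ := om ^ 2 * n / (ut - lt) with hB
  set C : ℝ := (us - ls) * (ut - lt) / n - 2 * (op + om) -
      chiScore (op + om) ((us - ls) * (ut - lt) / n) with hC
  set G : ℝ → ℝ := fun x => A * (us - x)⁻¹ + B * (x - ls)⁻¹ + C with hG
  have hltne : ut - lt ≠ 0 := ne_of_gt (sub_pos.2 hlt)
  have hnne : n ≠ 0 := ne_of_gt hn
  -- pointwise equality on the open interval
  have heq : ∀ x ∈ Set.Ioo ls us, deltaChi ls us lt ut n op om x = G x := by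
    intro x hx
    have h5 : us - x ≠ 0 := ne_of_gt (sub_pos.2 hx.2)
    have h6 : x - ls ≠ 0 := ne_of_gt (sub_pos.2 hx.1)
    have h7 : us - ls ≠ 0 := ne_of_gt (sub_pos.2 hlu)
    simp only [hG, hA, hB, hC, deltaChi, chiScore]
    field_simp
    ring
  -- strict convexity of G
  have hGsc : StrictConvexOn ℝ (Set.Ioo ls us) G := by
    have hABsum : StrictConvexOn ℝ (Set.Ioo ls us)
        (fun x => A * (us - x)⁻¹ + B * (x - ls)⁻¹) := by
      rcases not_and_or.mp hne with h | h
      · have hApos : 0 < A := by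
          have : 0 < op ^ 2 := pow_pos (lt_of_le_of_ne hop (Ne.symm h)) 2
          exact div_pos (mul_pos this hn) (sub_pos.2 hlt)
        have hBnn : 0 ≤ B := div_nonneg (mul_nonneg (sq_nonneg om) hn.le) (sub_pos.2 hlt).le
        exact (smul_strictConvexOn hApos (sc_upper ls us)).add_convexOn
          (cv_smul hBnn (sc_lower ls us).convexOn)
      · have hBpos : 0 < B := by
          have : 0 < om ^ 2 := pow_pos (lt_of_le_of_ne hom (Ne.symm h)) 2
          exact div_pos (mul_pos this hn) (sub_pos.2 hlt)
        have hAnn : 0 ≤ A := div_nonneg (mul_nonneg (sq_nonneg op) hn.le) (sub_pos.2 hlt).le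
        exact (cv_smul hAnn (sc_upper ls us).convexOn).add_strictConvexOn
          (smul_strictConvexOn hBpos (sc_lower ls us))
    simpa [hG, Pi.add_def] using hABsum.add_const C
  have ha : a ∈ Set.Ioo ls us := ⟨h1, by linarith⟩
  have hb : b ∈ Set.Ioo ls us := ⟨by linarith, h4⟩
  have hc : c ∈ Set.Ioo ls us := ⟨by linarith, by linarith⟩
  have hcseg : c ∈ openSegment ℝ a b := by
    rw [openSegment_eq_Ioo (by linarith : a < b)]
    exact ⟨h2, h3⟩
  have := hGsc.lt_on_openSegment ha hb (ne_of_lt (by linarith : a < b)) hcseg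
  rw [heq a ha, heq b hb, heq c hc]
  exact this
end

section
/- Strict convexity of the chi-score change: if the fixed observed counts satisfy (o_+, o_−) ≠ (0, 0), then the function c ↦ δ_chi(c) is strictly convex on the open interval (l_s, u_s). -/
/-!
On `e > 0` we have `chiScore o e = o² / e + e - 2 o`, strictly convex in `e` when `o ≠ 0` and
affine when `o = 0`. With `k = (ut - lt) / n > 0`, the expected counts `k (us - c)` and
`k (c - ls)` are injective affine functions of `c`, positive on `(ls, us)`, while the unsplit term
does not depend on `c`. Since `op` or `om` is nonzero, `deltaChi` is a strictly convex function
plus a convex one plus a constant.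
-/

open Set Function

section
variable {𝕜 E β : Type*} [CommSemiring 𝕜] [PartialOrder 𝕜] [AddCommMonoid E] [Module 𝕜 E]
  [AddCommMonoid β] [PartialOrder β] [Module 𝕜 β] [PosSMulStrictMono 𝕜 β]

theorem StrictConvexOn.smul {s : Set E} {f : E → β} {c : 𝕜} (hc : 0 < c)
    (hf : StrictConvexOn 𝕜 s f) : StrictConvexOn 𝕜 s fun x => c • f x :=
  ⟨hf.1, fun x hx y hy hxy a b ha hb hab =>
    calc
      c • f (a • x + b • y) < c • (a • f x + b • f y) :=
        smul_lt_smul_of_pos_left (hf.2 hx hy hxy ha hb hab) hc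
      _ = a • c • f x + b • c • f y := by rw [smul_add, smul_comm c, smul_comm c]⟩

end

section
variable {𝕜 E F β : Type*} [Ring 𝕜] [PartialOrder 𝕜] [AddCommGroup E] [AddCommGroup F]
  [Module 𝕜 E] [Module 𝕜 F] [AddCommMonoid β] [PartialOrder β] [SMul 𝕜 β]

theorem StrictConvexOn.comp_affineMap {f : F → β} {g : E →ᵃ[𝕜] F} (hg : Injective g) {s : Set F}
    (hf : StrictConvexOn 𝕜 s f) : StrictConvexOn 𝕜 (g ⁻¹' s) (f ∘ g) :=
  ⟨hf.1.affine_preimage g, fun x hx y hy hxy a b ha hb hab => by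
    simpa only [comp_apply, Convex.combo_affine_apply hab] using
      hf.2 hx hy (hg.ne hxy) ha hb hab⟩

end

theorem chiScore_eq_of_ne_zero {e : ℝ} (o : ℝ) (he : e ≠ 0) :
    chiScore o e = o ^ 2 * e⁻¹ + (e - 2 * o) := by
  rw [chiScore]; field_simp; ring

theorem strictConvexOn_chiScore {o : ℝ} (ho : o ≠ 0) : StrictConvexOn ℝ (Ioi 0) (chiScore o) := by
  refine (((strictConvexOn_zpow (m := -1) (by norm_num) (by norm_num)).smul
    (by positivity : (0 : ℝ) < o ^ 2)).add_convexOn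
    ((convexOn_id (convex_Ioi 0)).add_const (-2 * o))).congr fun e he => ?_
  simp only [Pi.add_apply, smul_eq_mul, zpow_neg_one, id_eq]
  rw [chiScore_eq_of_ne_zero o he.ne']
  ring

theorem convexOn_chiScore (o : ℝ) : ConvexOn ℝ (Ioi 0) (chiScore o) := by
  rcases eq_or_ne o 0 with rfl | ho
  · exact (convexOn_id (convex_Ioi 0)).congr fun e he => by simp [chiScore_eq_of_ne_zero 0 he.ne']
  · exact (strictConvexOn_chiScore ho).convexOn

theorem deltaChi_strictConvexOn_general (ls us lt ut n op om : ℝ)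
    (hlt : lt < ut) (hn : 0 < n) (hne : ¬(op = 0 ∧ om = 0)) :
    StrictConvexOn ℝ (Set.Ioo ls us) (deltaChi ls us lt ut n op om) := by
  set k := (ut - lt) / n
  have hk : 0 < k := div_pos (sub_pos.2 hlt) hn
  set ePlus : ℝ →ᵃ[ℝ] ℝ := k • (AffineMap.const ℝ ℝ us - AffineMap.id ℝ ℝ)
  set eMinus : ℝ →ᵃ[ℝ] ℝ := k • (AffineMap.id ℝ ℝ - AffineMap.const ℝ ℝ ls)
  have hePlus : ∀ c, ePlus c = (us - c) * (ut - lt) / n := fun c =>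
    show k * (us - c) = _ by ring
  have heMinus : ∀ c, eMinus c = (c - ls) * (ut - lt) / n := fun c =>
    show k * (c - ls) = _ by ring
  have hinjPlus : Injective ePlus := fun x y h => by simpa [ePlus, hk.ne'] using h
  have hinjMinus : Injective eMinus := fun x y h => by simpa [eMinus, hk.ne'] using h
  have hposPlus : Ioo ls us ⊆ ePlus ⁻¹' Ioi 0 := fun c hc => by
    rw [mem_preimage, hePlus]; exact div_pos (mul_pos (sub_pos.2 hc.2) (sub_pos.2 hlt)) hn
  have hposMinus : Ioo ls us ⊆ eMinus ⁻¹' Ioi 0 := fun c hc => by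
    rw [mem_preimage, heMinus]; exact div_pos (mul_pos (sub_pos.2 hc.1) (sub_pos.2 hlt)) hn
  have hδ : deltaChi ls us lt ut n op om = chiScore op ∘ ePlus + chiScore om ∘ eMinus +
      fun _ => -chiScore (op + om) ((us - ls) * (ut - lt) / n) := by
    funext c
    simp only [deltaChi, Pi.add_apply, comp_apply, hePlus, heMinus]
    ring
  rw [hδ]
  refine StrictConvexOn.add_const ?_ _
  have hconvPlus := ((convexOn_chiScore op).comp_affineMap ePlus).subset hposPlus (convex_Ioo ls us)
  have hconvMinus :=
    ((convexOn_chiScore om).comp_affineMap eMinus).subset hposMinus (convex_Ioo ls us)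
  rcases not_and_or.mp hne with hop | hom
  · exact (((strictConvexOn_chiScore hop).comp_affineMap hinjPlus).subset hposPlus
      (convex_Ioo ls us)).add_convexOn hconvMinus
  · exact hconvPlus.add_strictConvexOn (((strictConvexOn_chiScore hom).comp_affineMap
      hinjMinus).subset hposMinus (convex_Ioo ls us))

/-- If `(op, om) ≠ (0, 0)`, the chi-score change `c ↦ δ_chi(c)` is strictly
convex on the open interval `(ls, us)`. -/
theorem deltaChi_strictConvexOn (ls us lt ut n op om : ℝ)
    (hlu : ls < us) (hlt : lt < ut) (hn : 0 < n)
    (hop : 0 ≤ op) (hom : 0 ≤ om) (hne : ¬(op = 0 ∧ om = 0)) :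
    StrictConvexOn ℝ (Set.Ioo ls us) (deltaChi ls us lt ut n op om) :=
  deltaChi_strictConvexOn_general ls us lt ut n op om hlt hn hne
end

section
/- First derivative of the chi-score change: for every c ∈ (l_s, u_s), the function δ_chi has derivative at c equal to (n/(u_t − l_t)) · ( o_+² / (u_s − c)² − o_−² / (c − l_s)² ). -/
/-! Away from `e = 0` we have `chiScore o e = o² / e - 2 o + e`, so `∂ chiScore / ∂e = 1 - o² / e²`.
Both expected counts move linearly in `c` with slopes `∓ (ut - lt) / n`, so the constant terms
`1` cancel and only the `o² / e²` terms survive, which rescale to the stated formula. -/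

theorem hasDerivAt_chiScore (o : ℝ) {e : ℝ} (he : e ≠ 0) :
    HasDerivAt (chiScore o) (1 - o ^ 2 / e ^ 2) e := by
  have h := (((hasDerivAt_const e o).fun_sub (hasDerivAt_id' e)).fun_pow 2).fun_div
    (hasDerivAt_id' e) he
  refine h.congr_deriv ?_
  field_simp
  ring

theorem deltaChi_hasDerivAt_general (ls us lt ut n op om : ℝ)
    (hlt : lt < ut) (hn : 0 < n) :
    ∀ c ∈ Set.Ioo ls us,
      HasDerivAt (deltaChi ls us lt ut n op om)
        ((n / (ut - lt)) * (op ^ 2 / (us - c) ^ 2 - om ^ 2 / (c - ls) ^ 2)) c := by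
  rintro c ⟨hlc, hcu⟩
  have hk : ut - lt ≠ 0 := (sub_pos.2 hlt).ne'
  have hup_ne : (us - c) * (ut - lt) / n ≠ 0 :=
    div_ne_zero (mul_ne_zero (sub_pos.2 hcu).ne' hk) hn.ne'
  have hlow_ne : (c - ls) * (ut - lt) / n ≠ 0 :=
    div_ne_zero (mul_ne_zero (sub_pos.2 hlc).ne' hk) hn.ne'
  have hup_deriv : HasDerivAt (fun c => (us - c) * (ut - lt) / n) (-1 * (ut - lt) / n) c :=
    (((hasDerivAt_id c).const_sub us).mul_const _).div_const n
  have hlow_deriv : HasDerivAt (fun c => (c - ls) * (ut - lt) / n) (1 * (ut - lt) / n) c :=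
    (((hasDerivAt_id c).sub_const ls).mul_const _).div_const n
  have h := (((hasDerivAt_chiScore op hup_ne).comp c hup_deriv).add
    ((hasDerivAt_chiScore om hlow_ne).comp c hlow_deriv)).sub_const
    (chiScore (op + om) ((us - ls) * (ut - lt) / n))
  refine h.congr_deriv ?_
  field_simp
  ring

/-- First derivative of the chi-score change: for every `c ∈ (ls, us)`,
`δ_chi` has derivative `(n/(ut − lt)) · (op²/(us − c)² − om²/(c − ls)²)` at `c`. -/
theorem deltaChi_hasDerivAt (ls us lt ut n op om : ℝ)
    (hlu : ls < us) (hlt : lt < ut) (hn : 0 < n)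
    (hop : 0 ≤ op) (hom : 0 ≤ om) :
    ∀ c ∈ Set.Ioo ls us,
      HasDerivAt (deltaChi ls us lt ut n op om)
        ((n / (ut - lt)) * (op ^ 2 / (us - c) ^ 2 - om ^ 2 / (c - ls) ^ 2)) c :=
  deltaChi_hasDerivAt_general ls us lt ut n op om hlt hn
end

section
/- Strict convexity of the mi-score change: if the fixed observed counts satisfy (o_+, o_−) ≠ (0, 0), then the function c ↦ δ_mi(c) is strictly convex on the open interval (l_s, u_s). -/
/-- The mi score of a bin with observed count `o` and expected count `e`,
for total sample size `n`: `mi(o, e) = (o/n)·log(o/e)`.  The convention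
`0·log 0 = 0` holds automatically since `Real.log 0 = 0`. -/
noncomputable def miScore (n o e : ℝ) : ℝ := (o / n) * Real.log (o / e)

/-- The change in total mi score due to a vertical split of the bin
`(ls, us] × (lt, ut]` at coordinate `c`, with fixed observed counts `op`
above and `om` below the split, and total sample size `n`. -/
noncomputable def deltaMi (ls us lt ut n op om : ℝ) (c : ℝ) : ℝ :=
  miScore n op ((us - c) * (ut - lt) / n) +
  miScore n om ((c - ls) * (ut - lt) / n) -
  miScore n (op + om) ((us - ls) * (ut - lt) / n)

private lemma strictConvexOn_congr' {s : Set ℝ} {f g : ℝ → ℝ}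
    (hf : StrictConvexOn ℝ s f) (h : ∀ x ∈ s, f x = g x) : StrictConvexOn ℝ s g :=
  ⟨hf.1, fun x hx y hy hxy a b ha hb hab => by
    rw [← h x hx, ← h y hy, ← h _ (hf.1 hx hy ha.le hb.le hab)]
    exact hf.2 hx hy hxy ha hb hab⟩

private lemma strictConvexOn_mul {s : Set ℝ} {f : ℝ → ℝ} {c : ℝ}
    (hc : 0 < c) (hf : StrictConvexOn ℝ s f) : StrictConvexOn ℝ s (fun x => c * f x) :=
  ⟨hf.1, fun x hx y hy hxy a b ha hb hab => by
    have := hf.2 hx hy hxy ha hb hab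
    simp only [smul_eq_mul] at *
    nlinarith [mul_lt_mul_of_pos_left this hc]⟩

private lemma neg_log_us_sub {ls us : ℝ} :
    StrictConvexOn ℝ (Set.Ioo ls us) (fun c => -Real.log (us - c)) := by
  refine ⟨convex_Ioo _ _, ?_⟩
  intro x hx y hy hxy a b ha hb hab
  have hx' : (0:ℝ) < us - x := by linarith [hx.2]
  have hy' : (0:ℝ) < us - y := by linarith [hy.2]
  have h := strictConcaveOn_log_Ioi.2 (Set.mem_Ioi.mpr hx') (Set.mem_Ioi.mpr hy')
    (by intro h; exact hxy (by linarith)) ha hb hab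
  simp only [smul_eq_mul] at h ⊢
  have he : a * (us - x) + b * (us - y) = us - (a * x + b * y) := by linear_combination us * hab
  rw [he] at h
  linarith

private lemma neg_log_sub_ls {ls us : ℝ} :
    StrictConvexOn ℝ (Set.Ioo ls us) (fun c => -Real.log (c - ls)) := by
  refine ⟨convex_Ioo _ _, ?_⟩
  intro x hx y hy hxy a b ha hb hab
  have hx' : (0:ℝ) < x - ls := by linarith [hx.1]
  have hy' : (0:ℝ) < y - ls := by linarith [hy.1]
  have h := strictConcaveOn_log_Ioi.2 (Set.mem_Ioi.mpr hx') (Set.mem_Ioi.mpr hy')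
    (by intro h; exact hxy (by linarith)) ha hb hab
  simp only [smul_eq_mul] at h ⊢
  have he : a * (x - ls) + b * (y - ls) = a * x + b * y - ls := by linear_combination (-ls) * hab
  rw [he] at h
  linarith

private lemma mi_expand {n o e1 e2 : ℝ} (ho : 0 ≤ o) (he1 : 0 < e1) (he2 : 0 < e2) :
    (o / n) * Real.log (o / (e1 * e2)) =
      (o / n) * (-Real.log e1) + (o / n) * (Real.log o - Real.log e2) := by
  rcases eq_or_lt_of_le ho with h | h
  · simp [← h]
  · rw [Real.log_div (ne_of_gt h) (ne_of_gt (mul_pos he1 he2)),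
      Real.log_mul (ne_of_gt he1) (ne_of_gt he2)]
    ring

/-- If `(op, om) ≠ (0, 0)`, the mi-score change `c ↦ δ_mi(c)` is strictly
convex on the open interval `(ls, us)`. -/
theorem deltaMi_strictConvexOn (ls us lt ut n op om : ℝ)
    (hlu : ls < us) (hlt : lt < ut) (hn : 0 < n)
    (hop : 0 ≤ op) (hom : 0 ≤ om) (hne : ¬(op = 0 ∧ om = 0)) :
    StrictConvexOn ℝ (Set.Ioo ls us) (deltaMi ls us lt ut n op om) := by
  have hA : 0 ≤ op / n := div_nonneg hop hn.le
  have hB : 0 ≤ om / n := div_nonneg hom hn.le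
  have he2 : (0:ℝ) < (ut - lt) / n := div_pos (by linarith) hn
  set K : ℝ := (op / n) * (Real.log op - Real.log ((ut - lt) / n)) +
    (om / n) * (Real.log om - Real.log ((ut - lt) / n)) -
    miScore n (op + om) ((us - ls) * (ut - lt) / n) with hK
  have hbase : StrictConvexOn ℝ (Set.Ioo ls us)
      (fun c => (op / n) * (-Real.log (us - c)) + (om / n) * (-Real.log (c - ls))) := by
    rcases lt_or_eq_of_le hA with hA' | hA'
    · exact (strictConvexOn_mul hA' neg_log_us_sub).add_convexOn
        ((neg_log_sub_ls.convexOn).smul hB)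
    · have hB' : 0 < om / n := by
        rcases lt_or_eq_of_le hB with h | h
        · exact h
        · exfalso; apply hne
          constructor
          · field_simp at hA'; linarith
          · field_simp at h; linarith
      exact ((neg_log_us_sub.convexOn).smul hA).add_strictConvexOn
        (strictConvexOn_mul hB' neg_log_sub_ls)
  have hconv := hbase.add_const K
  refine strictConvexOn_congr' hconv ?_
  intro c hc
  have h1 : (0:ℝ) < us - c := by linarith [hc.2]
  have h2 : (0:ℝ) < c - ls := by linarith [hc.1]
  have e1 : (us - c) * (ut - lt) / n = (us - c) * ((ut - lt) / n) := by ring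
  have e2 : (c - ls) * (ut - lt) / n = (c - ls) * ((ut - lt) / n) := by ring
  simp only [deltaMi, miScore, e1, e2]
  rw [mi_expand hop h1 he2, mi_expand hom h2 he2, hK]
  simp only [Pi.add_apply, miScore]
  ring
end

section
/- First derivative of the mi-score change: for every c ∈ (l_s, u_s), the function δ_mi has derivative at c equal to o_+ / (n(u_s − c)) − o_− / (n(c − l_s)). -/
theorem HasDerivAt.miScore {n o e' c : ℝ} {e : ℝ → ℝ} (he : HasDerivAt e e' c)
    (hec : e c ≠ 0) :
    HasDerivAt (fun x => miScore n o (e x)) (-(o / n) * (e' / e c)) c := by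
  rcases eq_or_ne o 0 with rfl | ho
  · simpa [_root_.miScore] using hasDerivAt_const c (0 : ℝ)
  have hquot : HasDerivAt (fun x => o / e x) ((0 * e c - o * e') / e c ^ 2) c :=
    (hasDerivAt_const c o).div he hec
  refine ((hquot.log (div_ne_zero ho hec)).const_mul (o / n)).congr_deriv ?_
  field_simp
  ring

theorem deltaMi_hasDerivAt_general (ls us lt ut n op om : ℝ)
    (hlt : lt < ut) (hn : 0 < n) :
    ∀ c ∈ Set.Ioo ls us,
      HasDerivAt (deltaMi ls us lt ut n op om)
        (op / (n * (us - c)) - om / (n * (c - ls))) c := by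
  rintro c ⟨hlc, hcu⟩
  have hK : ut - lt ≠ 0 := (sub_pos.2 hlt).ne'
  have hu : us - c ≠ 0 := (sub_pos.2 hcu).ne'
  have hl : c - ls ≠ 0 := (sub_pos.2 hlc).ne'
  have hupper := ((((hasDerivAt_id' c).const_sub us).mul_const (ut - lt)).div_const n).miScore
    (n := n) (o := op) (div_ne_zero (mul_ne_zero hu hK) hn.ne')
  have hlower := ((((hasDerivAt_id' c).sub_const ls).mul_const (ut - lt)).div_const n).miScore
    (n := n) (o := om) (div_ne_zero (mul_ne_zero hl hK) hn.ne')
  refine ((hupper.add hlower).sub_const _).congr_deriv ?_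
  field_simp
  ring

/-- First derivative of the mi-score change: for every `c ∈ (ls, us)`,
`δ_mi` has derivative `op/(n(us − c)) − om/(n(c − ls))` at `c`. -/
theorem deltaMi_hasDerivAt (ls us lt ut n op om : ℝ)
    (hlu : ls < us) (hlt : lt < ut) (hn : 0 < n)
    (hop : 0 ≤ op) (hom : 0 ≤ om) :
    ∀ c ∈ Set.Ioo ls us,
      HasDerivAt (deltaMi ls us lt ut n op om)
        (op / (n * (us - c)) - om / (n * (c - ls))) c :=
  deltaMi_hasDerivAt_general ls us lt ut n op om hlt hn
end
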